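/- Let (Ω, 𝓕, P) be a probability space with a filtration (𝓕_j)_{j∈ℕ}, let n ≥ 1, let a_1,…,a_n be real numbers, and let ξ_1,…,ξ_n be square-integrable real random variables. Suppose there are positive integers m_1,…,m_n, pairwise distinct, such that for each i: (a) ξ_i is 𝓕_{m_i}-measurable, and (b) E[ξ_i | 𝓕_0] = E[ξ_i] almost surely. For j ≥ 1 write P_j Z = E[Z | 𝓕_j] − E[Z | 𝓕_{j−1}]. Suppose δ : ℕ → [0,∞) is summable and ‖P_j ξ_i‖_{L²} ≤ δ(m_i − j) for every i and every 1 ≤ j ≤ m_i. Then ‖ Σ_{i=1}^n a_i (ξ_i − E ξ_i) ‖_{L²} ≤ ( Σ_{i=1}^n a_i² )^{1/2} · Σ_{u=0}^∞ δ(u). -/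

import Mathlib

/-!
Telescoping gives `ξ_i − E ξ_i = Σ_u P_{m_i − u} ξ_i`, a sum over the lag `u`. For a fixed lag the
terms `P_{m_i − u} ξ_i` live at pairwise distinct levels of the filtration, so they are orthogonal
martingale differences and Pythagoras bounds `‖Σ_i a_i P_{m_i − u} ξ_i‖_{L²}` by
`(Σ_i a_i²)^{1/2} δ(u)`. Minkowski's inequality over the lags finishes the proof.
-/

open MeasureTheory Filter Finset
open scoped RealInnerProductSpace

section Pythagoras

variable {E ι : Type*} [NormedAddCommGroup E] [InnerProductSpace ℝ E] [Fintype ι]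

theorem norm_sum_sq_eq_of_pairwise_inner_eq_zero {v : ι → E}
    (horth : Pairwise fun i j => ⟪v i, v j⟫ = 0) :
    ‖∑ i, v i‖ ^ 2 = ∑ i, ‖v i‖ ^ 2 := by
  classical
  rw [← real_inner_self_eq_norm_sq, sum_inner]
  refine sum_congr rfl fun i _ => ?_
  rw [inner_sum, sum_eq_single i (fun j _ hji => horth hji.symm) (by simp),
    real_inner_self_eq_norm_sq]

theorem norm_sum_smul_le_of_pairwise_inner_eq_zero (a : ι → ℝ) {v : ι → E} {d : ℝ}
    (hd : 0 ≤ d) (horth : Pairwise fun i j => ⟪v i, v j⟫ = 0) (hv : ∀ i, ‖v i‖ ≤ d) :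
    ‖∑ i, a i • v i‖ ≤ √(∑ i, a i ^ 2) * d := by
  have horth' : Pairwise fun i j => ⟪a i • v i, a j • v j⟫ = 0 := fun i j hij => by
    simp only [real_inner_smul_left, real_inner_smul_right, horth hij, mul_zero]
  rw [← Real.sqrt_sq (norm_nonneg _), norm_sum_sq_eq_of_pairwise_inner_eq_zero horth',
    ← Real.sqrt_sq hd, ← Real.sqrt_mul (sum_nonneg fun i _ => sq_nonneg (a i)), sum_mul]
  refine Real.sqrt_le_sqrt (sum_le_sum fun i _ => ?_)
  rw [norm_smul, mul_pow, Real.norm_eq_abs, sq_abs]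
  gcongr
  exact hv i

end Pythagoras

namespace MeasureTheory

section L2

variable {Ω : Type*} {mΩ : MeasurableSpace Ω} {μ : Measure Ω}

theorem MemLp.inner_toLp_eq_integral {f g : Ω → ℝ} (hf : MemLp f 2 μ) (hg : MemLp g 2 μ) :
    ⟪hf.toLp f, hg.toLp g⟫ = ∫ ω, f ω * g ω ∂μ := by
  rw [L2.inner_def]
  refine integral_congr_ae ?_
  filter_upwards [hf.coeFn_toLp, hg.coeFn_toLp] with ω hfω hgω
  simp [hfω, hgω, mul_comm]

theorem eLpNorm_sum_mul_le_of_pairwise_integral_mul_eq_zero {ι : Type*} [Fintype ι]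
    (a : ι → ℝ) {Y : ι → Ω → ℝ} {d : ℝ} (hd : 0 ≤ d) (hY : ∀ i, MemLp (Y i) 2 μ)
    (horth : Pairwise fun i j => ∫ ω, Y i ω * Y j ω ∂μ = 0)
    (hYd : ∀ i, eLpNorm (Y i) 2 μ ≤ ENNReal.ofReal d) :
    eLpNorm (fun ω => ∑ i, a i * Y i ω) 2 μ ≤ ENNReal.ofReal (√(∑ i, a i ^ 2) * d) := by
  set v : ι → Lp ℝ 2 μ := fun i => (hY i).toLp (Y i)
  have hsum : ⇑(∑ i, a i • v i) =ᵐ[μ] fun ω => ∑ i, a i * Y i ω := by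
    have hv : ∀ᵐ ω ∂μ, ∀ i, (a i • v i : Lp ℝ 2 μ) ω = a i * Y i ω := ae_all_iff.2 fun i => by
      filter_upwards [Lp.coeFn_smul (a i) (v i), (hY i).coeFn_toLp] with ω hsmul hYω
      rw [hsmul, Pi.smul_apply, hYω, smul_eq_mul]
    filter_upwards [Lp.coeFn_fun_finsetSum univ fun i => a i • v i, hv] with ω hω hvω
    exact hω.trans (sum_congr rfl fun i _ => hvω i)
  have hnorm : ‖∑ i, a i • v i‖ ≤ √(∑ i, a i ^ 2) * d :=
    norm_sum_smul_le_of_pairwise_inner_eq_zero a hd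
      (fun i j hij => ((hY i).inner_toLp_eq_integral (hY j)).trans (horth hij))
      (fun i => by rw [Lp.norm_toLp]; exact ENNReal.toReal_le_of_le_ofReal hd (hYd i))
  rw [← eLpNorm_congr_ae hsum, ← Lp.enorm_def, ← ofReal_norm]
  exact ENNReal.ofReal_le_ofReal hnorm

theorem eLpNorm_sum_range_le_ofReal_mul_tsum {E : Type*} [NormedAddCommGroup E] {p : ENNReal}
    (hp : 1 ≤ p) {g : ℕ → Ω → E} (hg : ∀ u, AEStronglyMeasurable (g u) μ) {c : ℝ} (hc : 0 ≤ c)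
    {δ : ℕ → ℝ} (hδ0 : ∀ u, 0 ≤ δ u) (hδsum : Summable δ)
    (hgδ : ∀ u, eLpNorm (g u) p μ ≤ ENNReal.ofReal (c * δ u)) (M : ℕ) :
    eLpNorm (∑ u ∈ range M, g u) p μ ≤ ENNReal.ofReal (c * ∑' u, δ u) :=
  calc eLpNorm (∑ u ∈ range M, g u) p μ
      ≤ ∑ u ∈ range M, eLpNorm (g u) p μ := eLpNorm_sum_le (fun u _ => hg u) hp
    _ ≤ ∑ u ∈ range M, ENNReal.ofReal (c * δ u) := sum_le_sum fun u _ => hgδ u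
    _ = ENNReal.ofReal (c * ∑ u ∈ range M, δ u) := by
      rw [mul_sum, ENNReal.ofReal_sum_of_nonneg fun u _ => mul_nonneg hc (hδ0 u)]
    _ ≤ ENNReal.ofReal (c * ∑' u, δ u) := by
      gcongr
      exact hδsum.sum_le_tsum _ fun u _ => hδ0 u

end L2

section Increments

variable {Ω : Type*} {mΩ : MeasurableSpace Ω} {μ : Measure Ω} {ℱ : Filtration ℕ mΩ}

/-- The projection `P_j` of the paper. Truncated subtraction makes `P_0 f = 0`, so in `P_{m − u}`
the lags `u ≥ m` contribute nothing. -/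
noncomputable def condExpIncrement (μ : Measure Ω) (ℱ : Filtration ℕ mΩ) (j : ℕ) (f : Ω → ℝ) :
    Ω → ℝ :=
  μ[f | ℱ j] - μ[f | ℱ (j - 1)]

@[simp]
theorem condExpIncrement_zero (f : Ω → ℝ) : condExpIncrement μ ℱ 0 f = 0 :=
  sub_self _

theorem stronglyMeasurable_condExpIncrement_of_le {j k : ℕ} (hjk : j ≤ k) (f : Ω → ℝ) :
    StronglyMeasurable[ℱ k] (condExpIncrement μ ℱ j f) :=
  (stronglyMeasurable_condExp.mono (ℱ.mono hjk)).sub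
    (stronglyMeasurable_condExp.mono (ℱ.mono (j.sub_le 1 |>.trans hjk)))

theorem MemLp.condExpIncrement {f : Ω → ℝ} {p : ENNReal} (hp : 1 ≤ p) (hf : MemLp f p μ)
    (j : ℕ) : MemLp (condExpIncrement μ ℱ j f) p μ :=
  (hf.condExp hp).sub (hf.condExp hp)

theorem sum_range_condExpIncrement_sub {m M : ℕ} (hmM : m ≤ M) (f : Ω → ℝ) :
    ∑ u ∈ range M, condExpIncrement μ ℱ (m - u) f = μ[f | ℱ m] - μ[f | ℱ 0] := by
  have hlate : ∑ u ∈ Ico m M, condExpIncrement μ ℱ (m - u) f = 0 := sum_eq_zero fun u hu => by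
    rw [Nat.sub_eq_zero_of_le (mem_Ico.1 hu).1, condExpIncrement_zero]
  rw [← sum_range_add_sum_Ico _ hmM, hlate, add_zero, ← sum_range_reflect,
    ← sum_range_sub fun j => μ[f | ℱ j]]
  refine sum_congr rfl fun u hu => ?_
  rw [condExpIncrement, show m - (m - 1 - u) = u + 1 by grind, Nat.add_sub_cancel]

variable [SigmaFiniteFiltration μ ℱ]

theorem sub_integral_ae_eq_sum_condExpIncrement {f : Ω → ℝ} {m M : ℕ} (hmM : m ≤ M)
    (hf : Integrable f μ) (hfm : StronglyMeasurable[ℱ m] f)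
    (hf0 : μ[f | ℱ 0] =ᵐ[μ] fun _ => ∫ ω, f ω ∂μ) :
    (fun ω => f ω - ∫ ω', f ω' ∂μ) =ᵐ[μ] ∑ u ∈ range M, condExpIncrement μ ℱ (m - u) f := by
  rw [sum_range_condExpIncrement_sub hmM, condExp_of_stronglyMeasurable (ℱ.le m) hfm hf]
  filter_upwards [hf0] with ω hω
  simp [hω]

theorem condExp_condExpIncrement_pred (k : ℕ) (f : Ω → ℝ) :
    μ[condExpIncrement μ ℱ k f | ℱ (k - 1)] =ᵐ[μ] 0 := by
  have hsub : μ[condExpIncrement μ ℱ k f | ℱ (k - 1)]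
      =ᵐ[μ] μ[μ[f | ℱ k] | ℱ (k - 1)] - μ[μ[f | ℱ (k - 1)] | ℱ (k - 1)] :=
    condExp_sub integrable_condExp integrable_condExp _
  filter_upwards [hsub, condExp_condExp_of_le (f := f) (ℱ.mono (k.sub_le 1)) (ℱ.le k),
    condExp_condExp_of_le (f := f) (le_refl (ℱ (k - 1))) (ℱ.le (k - 1))] with ω hsub htower hidem
  rw [hsub, Pi.sub_apply, htower, hidem, sub_self, Pi.zero_apply]

theorem integral_mul_condExpIncrement_eq_zero {X f : Ω → ℝ} {k : ℕ}
    (hX : StronglyMeasurable[ℱ (k - 1)] X) (hXf : Integrable (X * condExpIncrement μ ℱ k f) μ) :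
    ∫ ω, X ω * condExpIncrement μ ℱ k f ω ∂μ = 0 := by
  have hint : Integrable (condExpIncrement μ ℱ k f) μ := integrable_condExp.sub integrable_condExp
  calc ∫ ω, X ω * condExpIncrement μ ℱ k f ω ∂μ
      = ∫ ω, (μ[X * condExpIncrement μ ℱ k f | ℱ (k - 1)]) ω ∂μ :=
        (integral_condExp (ℱ.le _)).symm
    _ = ∫ ω, (X * 0 : Ω → ℝ) ω ∂μ := integral_congr_ae <|
        (condExp_mul_of_stronglyMeasurable_left hX hXf hint).trans
          (EventuallyEq.rfl.mul (condExp_condExpIncrement_pred k f))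
    _ = 0 := by simp

theorem integral_condExpIncrement_mul_eq_zero {f g : Ω → ℝ} {j k : ℕ} (hjk : j ≠ k)
    (hf : MemLp f 2 μ) (hg : MemLp g 2 μ) :
    ∫ ω, condExpIncrement μ ℱ j f ω * condExpIncrement μ ℱ k g ω ∂μ = 0 := by
  wlog hlt : j < k generalizing j k f g
  · simp_rw [mul_comm (condExpIncrement μ ℱ j f _)]
    exact this hjk.symm hg hf (by omega)
  exact integral_mul_condExpIncrement_eq_zero
    (stronglyMeasurable_condExpIncrement_of_le (by omega) f)
    ((hf.condExpIncrement one_le_two j).integrable_mul (hg.condExpIncrement one_le_two k))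

theorem integral_condExpIncrement_sub_mul_eq_zero {f g : Ω → ℝ} {m₁ m₂ : ℕ} (hm : m₁ ≠ m₂)
    (u : ℕ) (hf : MemLp f 2 μ) (hg : MemLp g 2 μ) :
    ∫ ω, condExpIncrement μ ℱ (m₁ - u) f ω * condExpIncrement μ ℱ (m₂ - u) g ω ∂μ = 0 := by
  by_cases hlag : m₁ - u = m₂ - u
  · rw [← hlag, show m₁ - u = 0 by omega]
    simp
  · exact integral_condExpIncrement_mul_eq_zero hlag hf hg

end Increments

end MeasureTheory

theorem weighted_sum_L2_bound_general {Ω : Type*} {mΩ : MeasurableSpace Ω}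
    {μ : Measure Ω} [IsProbabilityMeasure μ] (ℱ : Filtration ℕ mΩ)
    (n : ℕ) (a : Fin n → ℝ) (ξ : Fin n → Ω → ℝ)
    (hξ : ∀ i, MemLp (ξ i) 2 μ)
    (m : Fin n → ℕ) (hm_inj : Function.Injective m)
    (hmeas : ∀ i, StronglyMeasurable[ℱ (m i)] (ξ i))
    (hinit : ∀ i, μ[ξ i | ℱ 0] =ᵐ[μ] fun _ => ∫ ω, ξ i ω ∂μ)
    (δ : ℕ → ℝ) (hδ0 : ∀ u, 0 ≤ δ u) (hδsum : Summable δ)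
    (hproj : ∀ i, ∀ j, 1 ≤ j → j ≤ m i →
      eLpNorm (fun ω => (μ[ξ i | ℱ j]) ω - (μ[ξ i | ℱ (j - 1)]) ω) 2 μ
        ≤ ENNReal.ofReal (δ (m i - j))) :
    eLpNorm (fun ω => ∑ i, a i * (ξ i ω - ∫ ω', ξ i ω' ∂μ)) 2 μ ≤
      ENNReal.ofReal (Real.sqrt (∑ i, (a i) ^ 2) * ∑' u, δ u) := by
  set M := univ.sup m
  set g : ℕ → Ω → ℝ := fun u ω => ∑ i, a i * condExpIncrement μ ℱ (m i - u) (ξ i) ω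
  have hP : ∀ i u, MemLp (condExpIncrement μ ℱ (m i - u) (ξ i)) 2 μ := fun i u =>
    (hξ i).condExpIncrement one_le_two _
  have hdecomp : (fun ω => ∑ i, a i * (ξ i ω - ∫ ω', ξ i ω' ∂μ)) =ᵐ[μ] ∑ u ∈ range M, g u := by
    filter_upwards [ae_all_iff.2 fun i => sub_integral_ae_eq_sum_condExpIncrement
      (le_sup (mem_univ i)) ((hξ i).integrable one_le_two) (hmeas i) (hinit i)] with ω hω
    simp only [Finset.sum_apply] at hω ⊢
    simp only [g, hω, mul_sum]
    exact sum_comm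
  have hPδ : ∀ i u, eLpNorm (condExpIncrement μ ℱ (m i - u) (ξ i)) 2 μ ≤ ENNReal.ofReal (δ u) := by
    intro i u
    rcases lt_or_ge u (m i) with hu | hu
    · have h := hproj i (m i - u) (by omega) (Nat.sub_le _ _)
      rwa [Nat.sub_sub_self hu.le] at h
    · simp [Nat.sub_eq_zero_of_le hu]
  have hlag : ∀ u, eLpNorm (g u) 2 μ ≤ ENNReal.ofReal (√(∑ i, a i ^ 2) * δ u) := fun u =>
    eLpNorm_sum_mul_le_of_pairwise_integral_mul_eq_zero a (hδ0 u) (hP · u)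
      (fun i i' hii' => integral_condExpIncrement_sub_mul_eq_zero (hm_inj.ne hii') u (hξ i) (hξ i'))
      (hPδ · u)
  have hg : ∀ u, AEStronglyMeasurable (g u) μ := fun u => by
    have := fun i => (hP i u).aestronglyMeasurable
    fun_prop
  rw [eLpNorm_congr_ae hdecomp]
  exact eLpNorm_sum_range_le_ofReal_mul_tsum one_le_two hg (Real.sqrt_nonneg _) hδ0 hδsum hlag M

/-- Abstract form of Lemma B.2(ii): a weighted sum of centered random variables that are
measurable at (pairwise distinct) levels `m i` of a filtration, whose martingale-difference
projections at lag `u` are bounded in `L²` by `δ u`, satisfies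
`‖Σ_i a_i (ξ_i − E ξ_i)‖_{L²} ≤ (Σ_i a_i²)^{1/2} · Σ_{u=0}^∞ δ(u)`. -/
theorem weighted_sum_L2_bound {Ω : Type*} {mΩ : MeasurableSpace Ω}
    {μ : Measure Ω} [IsProbabilityMeasure μ] (ℱ : Filtration ℕ mΩ)
    (n : ℕ) (hn : 1 ≤ n) (a : Fin n → ℝ) (ξ : Fin n → Ω → ℝ)
    (hξ : ∀ i, MemLp (ξ i) 2 μ)
    (m : Fin n → ℕ) (hm : ∀ i, 1 ≤ m i) (hm_inj : Function.Injective m)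
    (hmeas : ∀ i, StronglyMeasurable[ℱ (m i)] (ξ i))
    (hinit : ∀ i, μ[ξ i | ℱ 0] =ᵐ[μ] fun _ => ∫ ω, ξ i ω ∂μ)
    (δ : ℕ → ℝ) (hδ0 : ∀ u, 0 ≤ δ u) (hδsum : Summable δ)
    (hproj : ∀ i, ∀ j, 1 ≤ j → j ≤ m i →
      eLpNorm (fun ω => (μ[ξ i | ℱ j]) ω - (μ[ξ i | ℱ (j - 1)]) ω) 2 μ
        ≤ ENNReal.ofReal (δ (m i - j))) :
    eLpNorm (fun ω => ∑ i, a i * (ξ i ω - ∫ ω', ξ i ω' ∂μ)) 2 μ ≤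
      ENNReal.ofReal (Real.sqrt (∑ i, (a i) ^ 2) * ∑' u, δ u) :=
  weighted_sum_L2_bound_general ℱ n a ξ hξ m hm_inj hmeas hinit δ hδ0 hδsum hproj
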